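/- Let V = {1,...,K}, S ⊆ V, c ∈ ℕ, and let f(A) = -(1/(2σ²))·Σ_{i∈A}Σ_{j∈A} P(i,j) + Σ_{i∈A} ω(i) - log((c + |A ∩ S|)!) where P(i,j) = Σ_{d=1}^D Φ(i,d)·Φ(j,d) with Φ entrywise nonnegative, σ > 0 and ω : V → ℝ. Then f is submodular. (This is the MEIBP per-row objective F(Z_{n·}).) -/

import Mathlib

open Finset
open scoped Nat

/-!
Each of the three terms of the objective is submodular on its own, and submodularity is preserved
by sums and nonnegative scalings. The linear term is modular. The quadratic form of the
nonnegative Gram matrix `P` has marginal gain `P e e + ∑ i ∈ A, (P i e + P e i)`, which grows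
with `A`, so its negative is submodular. The term `-log ((c + k)!)` depends only on
`k = |A ∩ S|` and its increment `-log (c + k + 1)` decreases in `k`.
-/

def IsSubmodular {α : Type*} [DecidableEq α] (f : Finset α → ℝ) : Prop :=
  ∀ A B : Finset α, A ⊆ B → ∀ e ∉ B, f (insert e B) - f B ≤ f (insert e A) - f A

namespace IsSubmodular

variable {α : Type*} [DecidableEq α] {f g : Finset α → ℝ}

theorem add (hf : IsSubmodular f) (hg : IsSubmodular g) : IsSubmodular (f + g) := by
  intro A B hAB e he
  have := hf A B hAB e he
  have := hg A B hAB e he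
  simp only [Pi.add_apply]
  linarith

theorem const_mul {a : ℝ} (ha : 0 ≤ a) (hf : IsSubmodular f) :
    IsSubmodular fun A => a * f A := by
  intro A B hAB e he
  simpa only [← mul_sub] using mul_le_mul_of_nonneg_left (hf A B hAB e he) ha

end IsSubmodular

section

variable {α : Type*} [DecidableEq α]

theorem isSubmodular_sum (w : α → ℝ) : IsSubmodular fun A : Finset α => ∑ i ∈ A, w i := by
  intro A B hAB e he
  dsimp only
  rw [sum_insert he, sum_insert fun h => he (hAB h), add_sub_cancel_right, add_sub_cancel_right]

theorem sum_sum_insert_sub {P : α → α → ℝ} {A : Finset α} {e : α} (he : e ∉ A) :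
    ∑ i ∈ insert e A, ∑ j ∈ insert e A, P i j - ∑ i ∈ A, ∑ j ∈ A, P i j
      = P e e + ∑ i ∈ A, (P i e + P e i) := by
  simp only [sum_insert he, sum_add_distrib]
  ring

theorem isSubmodular_neg_sum_sum {P : α → α → ℝ} (hP : ∀ i j, 0 ≤ P i j) :
    IsSubmodular fun A : Finset α => -∑ i ∈ A, ∑ j ∈ A, P i j := by
  intro A B hAB e he
  have hmono : ∑ i ∈ A, (P i e + P e i) ≤ ∑ i ∈ B, (P i e + P e i) :=
    sum_le_sum_of_subset_of_nonneg hAB fun i _ _ => add_nonneg (hP i e) (hP e i)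
  have hA := sum_sum_insert_sub (P := P) fun h => he (hAB h)
  have hB := sum_sum_insert_sub (P := P) he
  linarith

theorem isSubmodular_comp_card_inter (S : Finset α) (h : ℕ → ℝ)
    (hh : Antitone fun n => h (n + 1) - h n) :
    IsSubmodular fun A : Finset α => h #(A ∩ S) := by
  intro A B hAB e he
  by_cases heS : e ∈ S
  · have hcard {C : Finset α} (heC : e ∉ C) : #(insert e C ∩ S) = #(C ∩ S) + 1 := by
      rw [insert_inter_of_mem heS, card_insert_of_notMem fun h => heC (mem_of_mem_inter_left h)]
    simp only [hcard he, hcard fun h => he (hAB h)]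
    exact hh (card_le_card (inter_subset_inter_right hAB))
  · simp only [insert_inter_of_notMem heS, sub_self, le_refl]

end

theorem log_factorial_succ_sub_log_factorial (n : ℕ) :
    Real.log (n + 1)! - Real.log n ! = Real.log (n + 1) := by
  rw [Nat.factorial_succ, Nat.cast_mul, Real.log_mul (by positivity) (by positivity)]
  push_cast
  ring

theorem antitone_neg_log_factorial_add_increment (c : ℕ) :
    Antitone fun n : ℕ => -Real.log (c + (n + 1))! - -Real.log (c + n)! := by
  have increment (k : ℕ) :
      -Real.log (c + (k + 1))! - -Real.log (c + k)! = -Real.log ((c + k : ℕ) + 1) := by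
    rw [← add_assoc, ← log_factorial_succ_sub_log_factorial]
    ring
  intro m n hmn
  simp only [increment]
  gcongr

theorem meibp_objective_submodular
    (K D : ℕ) (Φ : Fin K → Fin D → ℝ) (hΦ : ∀ i d, 0 ≤ Φ i d)
    (σ : ℝ) (hσ : 0 < σ) (ω : Fin K → ℝ)
    (S : Finset (Fin K)) (c : ℕ)
    (f : Finset (Fin K) → ℝ)
    (hf : ∀ A : Finset (Fin K),
        f A = -(1 / (2 * σ ^ 2)) *
              (∑ i ∈ A, ∑ j ∈ A, ∑ d, Φ i d * Φ j d)
            + (∑ i ∈ A, ω i)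
            - Real.log (Nat.factorial (c + (A ∩ S).card))) :
    ∀ A B : Finset (Fin K), A ⊆ B → ∀ e ∉ B,
      f (insert e A) - f A ≥ f (insert e B) - f B := by
  have hP (i j : Fin K) : 0 ≤ ∑ d, Φ i d * Φ j d :=
    sum_nonneg fun d _ => mul_nonneg (hΦ i d) (hΦ j d)
  have hf' : f = (fun A => 1 / (2 * σ ^ 2) * -∑ i ∈ A, ∑ j ∈ A, ∑ d, Φ i d * Φ j d)
      + (fun A => ∑ i ∈ A, ω i) + fun A => -Real.log (c + #(A ∩ S))! := by
    funext A
    simp only [hf, Pi.add_apply]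
    ring
  subst hf'
  exact (((isSubmodular_neg_sum_sum hP).const_mul (by positivity)).add (isSubmodular_sum ω)).add
    (isSubmodular_comp_card_inter S (fun k => -Real.log (c + k)!)
      (antitone_neg_log_factorial_add_increment c))
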